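/- arXiv:2202.10597 — 2 statements merged into one kernel-verified Lean document; each statement's English description precedes it below -/
import Mathlib

section
/- Let D be a 2×2 matrix-valued function, analytic in each entry on ℂ*, satisfying D(qz) = κ^{σ₃} D(z) κ^{-σ₃} for all z ∈ ℂ*, where σ₃ = diag(1,-1) and κ ∈ ℂ* with κ² ∉ q^ℤ. Then D is constant and diagonal: the off-diagonal entries vanish identically and the diagonal entries are constant functions. -/
/-!
If `f` is holomorphic on `ℂ*` with `f (q z) = c f z` and `‖c‖ ≤ 1`, then `f` is bounded on
the punctured unit disc (every point there is `q ^ n w` with `w` in the compact annulus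
`‖q‖ ≤ ‖w‖ ≤ 1`), so it extends to an entire function with the same functional equation.
Comparing Taylor coefficients at `0` gives `q ^ n a_n = c a_n`, so `a_n = 0` unless `c = q ^ n`.
A general twist `c` is first brought into the unit disc by passing to `z ^ m f z`, which has twist
`q ^ m c`.
-/

open Filter Function Metric Set Topology

namespace Complex

variable {q c : ℂ} {f : ℂ → ℂ}

lemma apply_eq_apply_zero_of_iteratedDeriv_eq_zero (hf : Differentiable ℂ f)
    (h : ∀ n ≠ 0, iteratedDeriv n f 0 = 0) (z : ℂ) : f z = f 0 := by
  refine (hasSum_taylorSeries_of_entire hf 0 z).unique ?_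
  convert hasSum_single 0 fun n hn => ?_
  · simp
  · simp [h n hn]

lemma iteratedDeriv_eq_zero_of_apply_mul_eq (hf : Differentiable ℂ f)
    (hfq : ∀ z, f (q * z) = c * f z) {n : ℕ} (hn : q ^ n ≠ c) : iteratedDeriv n f 0 = 0 := by
  have key : q ^ n * iteratedDeriv n f 0 = c * iteratedDeriv n f 0 :=
    calc q ^ n * iteratedDeriv n f 0 = iteratedDeriv n (fun z => f (q * z)) 0 := by
          simp only [iteratedDeriv_comp_const_mul hf.contDiff, mul_zero]
      _ = iteratedDeriv n (fun z => c * f z) 0 := by simp_rw [hfq]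
      _ = c * iteratedDeriv n f 0 := iteratedDeriv_const_mul_field c f
  by_contra ha
  exact hn (mul_right_cancel₀ ha key)

section Twisted

variable (hq0 : q ≠ 0) (hq1 : ‖q‖ < 1) (hf : DifferentiableOn ℂ f {0}ᶜ)
  (hfq : ∀ z ≠ 0, f (q * z) = c * f z)
include hq0 hq1 hf hfq

lemma exists_bound_punctured_closedBall_of_apply_mul_eq (hc : ‖c‖ ≤ 1) :
    ∃ M, ∀ z ∈ closedBall (0 : ℂ) 1 \ {0}, ‖f z‖ ≤ M := by
  set A := closedBall (0 : ℂ) 1 \ ball 0 ‖q‖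
  have hA0 : ∀ w ∈ A, w ≠ 0 := by
    rintro w ⟨-, hw⟩ rfl
    exact hw (mem_ball_self (norm_pos_iff.mpr hq0))
  obtain ⟨M, hM⟩ := ((isCompact_closedBall 0 1).diff isOpen_ball).exists_bound_of_continuousOn
    (hf.continuousOn.mono hA0)
  have hlayer : ∀ n : ℕ, ∀ w ∈ A, ‖f (q ^ n * w)‖ ≤ M := by
    intro n
    induction n with
    | zero => simpa only [pow_zero, one_mul] using hM
    | succ n ih =>
      intro w hw
      rw [pow_succ', mul_assoc, hfq _ (mul_ne_zero (pow_ne_zero _ hq0) (hA0 w hw)), norm_mul]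
      exact (mul_le_of_le_one_left (norm_nonneg _) hc).trans (ih w hw)
  refine ⟨M, fun z ⟨hz1, hz0⟩ => ?_⟩
  have hz : 0 < ‖z‖ := norm_pos_iff.mpr hz0
  obtain ⟨n, hlt, hle⟩ := exists_nat_pow_near_of_lt_one hz (mem_closedBall_zero_iff.mp hz1)
    (norm_pos_iff.mpr hq0) hq1
  have hqn : 0 < ‖q‖ ^ n := pow_pos (norm_pos_iff.mpr hq0) n
  have hw : z / q ^ n ∈ A := by
    simp only [A, Set.mem_sdiff, mem_closedBall_zero_iff, mem_ball_zero_iff, not_lt, norm_div,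
      norm_pow, le_div_iff₀ hqn, div_le_iff₀ hqn, one_mul, ← pow_succ']
    exact ⟨hle, hlt.le⟩
  simpa [mul_div_cancel₀ z (pow_ne_zero n hq0)] using hlayer n _ hw

lemma exists_differentiable_extension_of_apply_mul_eq (hc : ‖c‖ ≤ 1) :
    ∃ F : ℂ → ℂ, Differentiable ℂ F ∧ EqOn F f {0}ᶜ ∧ ∀ z, F (q * z) = c * F z := by
  obtain ⟨M, hM⟩ := exists_bound_punctured_closedBall_of_apply_mul_eq hq0 hq1 hf hfq hc
  set F := update f 0 (limUnder (𝓝[≠] 0) f)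
  have hFf : EqOn F f {0}ᶜ := fun z hz => update_of_ne hz _ _
  have hF : Differentiable ℂ F := by
    intro z
    rcases eq_or_ne z 0 with rfl | hz
    · have hball := closedBall_mem_nhds (0 : ℂ) one_pos
      exact (differentiableOn_update_limUnder_of_bddAbove hball
        (hf.mono (sdiff_subset_compl _ _)) ⟨M, forall_mem_image.2 hM⟩).differentiableAt hball
    · have hnhds : {0}ᶜ ∈ 𝓝 z := isOpen_compl_singleton.mem_nhds hz
      exact ((hf z hz).differentiableAt hnhds).congr_of_eventuallyEq
        (hFf.eventuallyEq_of_mem hnhds)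
  refine ⟨F, hF, hFf, congrFun ?_⟩
  refine Continuous.ext_on (dense_compl_singleton 0) (hF.continuous.comp (continuous_const_mul q))
    (continuous_const.mul hF.continuous) fun z hz => ?_
  simp only [hFf hz, hFf (mul_ne_zero hq0 hz), hfq z hz]

theorem eq_zero_of_apply_mul_eq (hcq : ∀ m : ℤ, c ≠ q ^ m) : ∀ z ≠ 0, f z = 0 := by
  have hlim : Tendsto (fun m : ℕ => q ^ m * c) atTop (𝓝 0) := by
    simpa using (tendsto_pow_atTop_nhds_zero_of_norm_lt_one hq1).mul_const c
  obtain ⟨m, hm⟩ := (hlim.eventually (closedBall_mem_nhds 0 one_pos)).exists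
  have hg : DifferentiableOn ℂ (fun z => z ^ m * f z) {0}ᶜ :=
    (differentiable_pow m).differentiableOn.mul hf
  have hgq : ∀ z ≠ 0, (q * z) ^ m * f (q * z) = q ^ m * c * (z ^ m * f z) := by
    intro z hz
    rw [hfq z hz]
    ring
  obtain ⟨G, hG, hGg, hGq⟩ := exists_differentiable_extension_of_apply_mul_eq hq0 hq1 hg hgq
    (mem_closedBall_zero_iff.mp hm)
  have hG0 : ∀ n : ℕ, iteratedDeriv n G 0 = 0 := by
    refine fun n => iteratedDeriv_eq_zero_of_apply_mul_eq hG hGq fun h => hcq (n - m) ?_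
    rw [zpow_sub₀ hq0, zpow_natCast, zpow_natCast, h]
    field_simp
  intro z hz
  have hgz : z ^ m * f z = 0 :=
    calc z ^ m * f z = G z := (hGg hz).symm
      _ = G 0 := apply_eq_apply_zero_of_iteratedDeriv_eq_zero hG (fun n _ => hG0 n) z
      _ = 0 := by simpa using hG0 0
  simpa [pow_ne_zero m hz] using hgz

end Twisted

theorem exists_eq_const_of_apply_mul_eq_self (hq0 : q ≠ 0) (hq1 : ‖q‖ < 1)
    (hf : DifferentiableOn ℂ f {0}ᶜ) (hfq : ∀ z ≠ 0, f (q * z) = f z) :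
    ∃ d, ∀ z ≠ 0, f z = d := by
  obtain ⟨F, hF, hFf, hFq⟩ := exists_differentiable_extension_of_apply_mul_eq hq0 hq1 hf
    (c := 1) (by simpa using hfq) norm_one.le
  have hF0 : ∀ n ≠ 0, iteratedDeriv n F 0 = 0 := fun n hn =>
    iteratedDeriv_eq_zero_of_apply_mul_eq hF hFq fun h =>
      (pow_lt_one₀ (norm_nonneg q) hq1 hn).ne (by rw [← norm_pow, h, norm_one])
  refine ⟨F 0, fun z hz => ?_⟩
  rw [← hFf hz, apply_eq_apply_zero_of_iteratedDeriv_eq_zero hF hF0]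

end Complex

theorem matrix_twist_constant_diagonal_general (q κ : ℂ)
    (hq0 : 0 < ‖q‖) (hq1 : ‖q‖ < 1)
    (hres : ∀ m : ℤ, κ ^ 2 ≠ q ^ m)
    (D : ℂ → Matrix (Fin 2) (Fin 2) ℂ)
    (hA : ∀ i j, AnalyticOn ℂ (fun z => D z i j) {z : ℂ | z ≠ 0})
    (h11 : ∀ z : ℂ, z ≠ 0 → D (q * z) 0 0 = D z 0 0)
    (h22 : ∀ z : ℂ, z ≠ 0 → D (q * z) 1 1 = D z 1 1)
    (h12 : ∀ z : ℂ, z ≠ 0 → D (q * z) 0 1 = κ ^ 2 * D z 0 1)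
    (h21 : ∀ z : ℂ, z ≠ 0 → D (q * z) 1 0 = (κ ^ 2)⁻¹ * D z 1 0) :
    (∀ z : ℂ, z ≠ 0 → D z 0 1 = 0 ∧ D z 1 0 = 0) ∧
    ∃ d₁ d₂ : ℂ, ∀ z : ℂ, z ≠ 0 → D z 0 0 = d₁ ∧ D z 1 1 = d₂ := by
  have hq : q ≠ 0 := norm_pos_iff.mp hq0
  have hD : ∀ i j, DifferentiableOn ℂ (fun z => D z i j) {0}ᶜ :=
    fun i j => (hA i j).differentiableOn
  have hres' : ∀ m : ℤ, (κ ^ 2)⁻¹ ≠ q ^ m :=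
    fun m h => hres (-m) (by rw [zpow_neg, ← h, inv_inv])
  have h01 := Complex.eq_zero_of_apply_mul_eq hq hq1 (hD 0 1) h12 hres
  have h10 := Complex.eq_zero_of_apply_mul_eq hq hq1 (hD 1 0) h21 hres'
  obtain ⟨d₁, hd₁⟩ := Complex.exists_eq_const_of_apply_mul_eq_self hq hq1 (hD 0 0) h11
  obtain ⟨d₂, hd₂⟩ := Complex.exists_eq_const_of_apply_mul_eq_self hq hq1 (hD 1 1) h22
  exact ⟨fun z hz => ⟨h01 z hz, h10 z hz⟩, d₁, d₂, fun z hz => ⟨hd₁ z hz, hd₂ z hz⟩⟩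

/-- A `2×2` matrix function analytic on `ℂ*` with
`D(qz) = κ^{σ₃} D(z) κ^{-σ₃}` and `κ² ∉ q^ℤ` is constant and diagonal. -/
theorem matrix_twist_constant_diagonal (q κ : ℂ)
    (hq0 : 0 < ‖q‖) (hq1 : ‖q‖ < 1)
    (hκ : κ ≠ 0) (hres : ∀ m : ℤ, κ ^ 2 ≠ q ^ m)
    (D : ℂ → Matrix (Fin 2) (Fin 2) ℂ)
    (hA : ∀ i j, AnalyticOn ℂ (fun z => D z i j) {z : ℂ | z ≠ 0})
    (h11 : ∀ z : ℂ, z ≠ 0 → D (q * z) 0 0 = D z 0 0)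
    (h22 : ∀ z : ℂ, z ≠ 0 → D (q * z) 1 1 = D z 1 1)
    (h12 : ∀ z : ℂ, z ≠ 0 → D (q * z) 0 1 = κ ^ 2 * D z 0 1)
    (h21 : ∀ z : ℂ, z ≠ 0 → D (q * z) 1 0 = (κ ^ 2)⁻¹ * D z 1 0) :
    (∀ z : ℂ, z ≠ 0 → D z 0 1 = 0 ∧ D z 1 0 = 0) ∧
    ∃ d₁ d₂ : ℂ, ∀ z : ℂ, z ≠ 0 → D z 0 0 = d₁ ∧ D z 1 1 = d₂ :=
  matrix_twist_constant_diagonal_general q κ hq0 hq1 hres D hA h11 h22 h12 h21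
end

section
/- Any analytic function f on ℂ* satisfying f(qz) = f(z) for all z ∈ ℂ* (with 0 < |q| < 1) is constant. -/
/-! Every nonzero `z` is carried by a power of `q` into the compact annulus `1 ≤ ‖z‖ ≤ ‖q‖⁻¹`,
so a `q`-periodic continuous function on `ℂ*` is bounded by its maximum there. Composing with
`exp` gives a bounded entire function, which is constant by Liouville's theorem; as `exp` maps
onto `ℂ*`, so is `f`. -/

open Metric

theorem apply_zpow_mul_eq_of_apply_mul_eq {G₀ α : Type*} [GroupWithZero G₀] {f : G₀ → α}
    {q : G₀} (hq : q ≠ 0) (hper : ∀ z, z ≠ 0 → f (q * z) = f z) (n : ℤ) {z : G₀}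
    (hz : z ≠ 0) : f (q ^ n * z) = f z := by
  induction n using Int.induction_on with
  | zero => simp
  | succ k ih =>
    rw [add_comm, zpow_one_add₀ hq, mul_assoc, hper _ (mul_ne_zero (zpow_ne_zero _ hq) hz), ih]
  | pred k ih =>
    have h := hper (q ^ (-(k : ℤ) - 1) * z) (mul_ne_zero (zpow_ne_zero _ hq) hz)
    rw [← mul_assoc, ← zpow_one_add₀ hq, add_sub_cancel] at h
    rw [← h, ih]

theorem exists_zpow_mul_mem_annulus {𝕜 : Type*} [NormedDivisionRing 𝕜] {q : 𝕜}
    (hq0 : 0 < ‖q‖) (hq1 : ‖q‖ < 1) {z : 𝕜} (hz : z ≠ 0) :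
    ∃ n : ℤ, q ^ n * z ∈ closedBall 0 ‖q‖⁻¹ \ ball 0 1 := by
  obtain ⟨n, hlo, hhi⟩ :=
    exists_mem_Ico_zpow (norm_pos_iff.2 hz) ((one_lt_inv₀ hq0).2 hq1)
  have hpow : 0 < ‖q‖⁻¹ ^ n := zpow_pos (inv_pos.2 hq0) n
  have hnorm : ‖q ^ n * z‖ = ‖z‖ / ‖q‖⁻¹ ^ n := by
    rw [norm_mul, norm_zpow, inv_zpow, div_eq_inv_mul, inv_inv]
  refine ⟨n, ?_, ?_⟩
  · rw [mem_closedBall_zero_iff, hnorm, div_le_iff₀ hpow, ← zpow_one_add₀ (by positivity),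
      add_comm]
    exact hhi.le
  · rw [mem_ball_zero_iff, not_lt, hnorm, le_div_iff₀ hpow, one_mul]
    exact hlo

theorem exists_bound_of_continuousOn_of_apply_mul_eq {𝕜 E : Type*} [NormedDivisionRing 𝕜]
    [ProperSpace 𝕜] [NormedAddCommGroup E] {f : 𝕜 → E} {q : 𝕜} (hq0 : 0 < ‖q‖) (hq1 : ‖q‖ < 1)
    (hf : ContinuousOn f {z | z ≠ 0})
    (hper : ∀ z, z ≠ 0 → f (q * z) = f z) : ∃ C, ∀ z, z ≠ 0 → ‖f z‖ ≤ C := by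
  have hsub : closedBall (0 : 𝕜) ‖q‖⁻¹ \ ball 0 1 ⊆ {z | z ≠ 0} := by
    rintro z ⟨-, hz⟩ rfl
    exact hz (mem_ball_self one_pos)
  obtain ⟨C, hC⟩ := ((isCompact_closedBall 0 _).diff isOpen_ball).exists_bound_of_continuousOn
    (hf.mono hsub)
  refine ⟨C, fun z hz => ?_⟩
  obtain ⟨n, hn⟩ := exists_zpow_mul_mem_annulus hq0 hq1 hz
  rw [← apply_zpow_mul_eq_of_apply_mul_eq (norm_pos_iff.1 hq0) hper n hz]
  exact hC _ hn

theorem exists_eq_const_of_differentiableOn_ne_zero_of_bounded {E : Type*} [NormedAddCommGroup E]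
    [NormedSpace ℂ E] {f : ℂ → E} (hf : DifferentiableOn ℂ f {z | z ≠ 0}) {C : ℝ}
    (hC : ∀ z, z ≠ 0 → ‖f z‖ ≤ C) : ∃ c, ∀ z, z ≠ 0 → f z = c := by
  have hg : Differentiable ℂ (f ∘ Complex.exp) := fun w =>
    ((hf.differentiableAt (isOpen_ne.mem_nhds (Complex.exp_ne_zero w))).comp w
      Complex.differentiableAt_exp)
  have hbdd : Bornology.IsBounded (Set.range (f ∘ Complex.exp)) :=
    isBounded_iff_forall_norm_le.2 ⟨C, by
      rintro _ ⟨w, rfl⟩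
      exact hC _ (Complex.exp_ne_zero w)⟩
  refine ⟨f (Complex.exp 0), fun z hz => ?_⟩
  obtain ⟨w, rfl⟩ : z ∈ Set.range Complex.exp := by rwa [Complex.range_exp]
  exact hg.apply_eq_apply_of_bounded hbdd w 0

/-- Any analytic function on `ℂ*` satisfying `f(qz) = f(z)` (with `0 < |q| < 1`)
is constant. -/
theorem q_periodic_constant (q : ℂ)
    (hq0 : 0 < ‖q‖) (hq1 : ‖q‖ < 1)
    (f : ℂ → ℂ) (hf : AnalyticOn ℂ f {z : ℂ | z ≠ 0})
    (hper : ∀ z : ℂ, z ≠ 0 → f (q * z) = f z) :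
    ∃ c : ℂ, ∀ z : ℂ, z ≠ 0 → f z = c := by
  obtain ⟨C, hC⟩ := exists_bound_of_continuousOn_of_apply_mul_eq hq0 hq1 hf.continuousOn hper
  exact exists_eq_const_of_differentiableOn_ne_zero_of_bounded hf.differentiableOn hC
end
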